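/- (Kernel-distance bound on the empirical IPM for square loss.) Define φ : ℝ^d × ℝ → ℝ^{d²+d+1} by φ(u, y) = (vec(uuᵀ), √2·y·u, y²). Let {(ψ_i, y_i)}_{i=1}^{m} and {(ψ'_i, y'_i)}_{i=1}^{n} be two finite samples in ℝ^d × ℝ with nonnegative weights a_i and b_i respectively. Then for every w ∈ ℝ^d with ‖w‖₂ ≤ 1, |∑_{i=1}^{m} a_i·(1/2)(⟨w, ψ_i⟩ − y_i)² − ∑_{i=1}^{n} b_i·(1/2)(⟨w, ψ'_i⟩ − y'_i)²| ≤ ‖∑_{i=1}^{m} a_i φ(ψ_i, y_i) − ∑_{i=1}^{n} b_i φ(ψ'_i, y'_i)‖₂. -/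

import Mathlib

open scoped InnerProductSpace

/-- The feature map `φ(u, y) = (vec(uuᵀ), √2·y·u, y²)` taking values in the Euclidean
space `ℝ^{d²} × ℝ^d × ℝ ≅ ℝ^{d²+d+1}` (indexed by `(Fin d × Fin d) ⊕ Fin d ⊕ Unit`). -/
noncomputable def phiSq {d : ℕ} (u : EuclideanSpace ℝ (Fin d)) (y : ℝ) :
    EuclideanSpace ℝ ((Fin d × Fin d) ⊕ Fin d ⊕ Unit) :=
  (WithLp.equiv 2 _).symm
    (Sum.elim (fun p => u p.1 * u p.2)
      (Sum.elim (fun i => Real.sqrt 2 * y * u i) fun _ => y ^ 2))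

/-!
The feature map realises the polynomial kernel: `⟪φ(u, y), φ(v, z)⟫ = (⟪u, v⟫ + y z)²`.
Taking `(v, z) = (w, -1)`, the square loss `½ (⟪w, u⟫ - y)²` is the inner product of `φ(u, y)`
with `θ = ½ φ(w, -1)`, whose norm is `(‖w‖² + 1) / 2 ≤ 1`. The difference of weighted losses is
therefore `⟪θ, ∑ aᵢ φᵢ - ∑ bⱼ φ'ⱼ⟫`, and Cauchy–Schwarz concludes.
-/

theorem sum_prod_type_mul_mul_eq_sq {ι R : Type*} [Fintype ι] [CommSemiring R] (f g : ι → R) :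
    ∑ p : ι × ι, f p.1 * f p.2 * (g p.1 * g p.2) = (∑ i, f i * g i) ^ 2 := by
  rw [sq, Finset.sum_mul_sum, ← Finset.univ_product_univ, Finset.sum_product]
  exact Finset.sum_congr rfl fun i _ => Finset.sum_congr rfl fun j _ => by ring

theorem inner_phiSq_phiSq {d : ℕ} (u v : EuclideanSpace ℝ (Fin d)) (y z : ℝ) :
    ⟪phiSq u y, phiSq v z⟫_ℝ = (⟪u, v⟫_ℝ + y * z) ^ 2 := by
  have hsqrt2 : Real.sqrt 2 * Real.sqrt 2 = 2 := Real.mul_self_sqrt zero_le_two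
  simp only [phiSq, PiLp.inner_apply, RCLike.inner_apply, conj_trivial, WithLp.equiv_symm_apply,
    Fintype.sum_sum_type, Sum.elim_inl, Sum.elim_inr, Fintype.sum_unique]
  rw [sum_prod_type_mul_mul_eq_sq]
  have hmid : ∑ i, Real.sqrt 2 * z * v i * (Real.sqrt 2 * y * u i) =
      2 * (y * z) * ∑ i, v i * u i := by
    rw [Finset.mul_sum]
    exact Finset.sum_congr rfl fun i _ => by linear_combination (y * z * v i * u i) * hsqrt2
  rw [hmid]
  ring

theorem norm_phiSq {d : ℕ} (u : EuclideanSpace ℝ (Fin d)) (y : ℝ) :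
    ‖phiSq u y‖ = ‖u‖ ^ 2 + y ^ 2 := by
  have h := inner_phiSq_phiSq u u y y
  rw [real_inner_self_eq_norm_sq, real_inner_self_eq_norm_sq, ← sq] at h
  exact (pow_left_inj₀ (norm_nonneg _) (by positivity) two_ne_zero).mp h

theorem abs_sum_inner_sub_sum_inner_le {E ι κ : Type*} [NormedAddCommGroup E]
    [InnerProductSpace ℝ E] [Fintype ι] [Fintype κ] {θ : E} (hθ : ‖θ‖ ≤ 1)
    (a : ι → ℝ) (x : ι → E) (b : κ → ℝ) (x' : κ → E) :
    |∑ i, a i * ⟪θ, x i⟫_ℝ - ∑ j, b j * ⟪θ, x' j⟫_ℝ| ≤ ‖∑ i, a i • x i - ∑ j, b j • x' j‖ := by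
  simp only [← real_inner_smul_right, ← inner_sum, ← inner_sub_right]
  exact (abs_real_inner_le_norm _ _).trans (mul_le_of_le_one_left (norm_nonneg _) hθ)

theorem square_loss_ipm_le_kernel_distance_general {d : ℕ} (m n : ℕ)
    (a : Fin m → ℝ) (ψ : Fin m → EuclideanSpace ℝ (Fin d)) (y : Fin m → ℝ)
    (b : Fin n → ℝ) (ψ' : Fin n → EuclideanSpace ℝ (Fin d)) (y' : Fin n → ℝ)
    (w : EuclideanSpace ℝ (Fin d)) (hw : ‖w‖ ≤ 1) :
    |(∑ i, a i * ((1 / 2 : ℝ) * (⟪w, ψ i⟫_ℝ - y i) ^ 2)) -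
        ∑ i, b i * ((1 / 2 : ℝ) * (⟪w, ψ' i⟫_ℝ - y' i) ^ 2)| ≤
      ‖(∑ i, a i • phiSq (ψ i) (y i)) - ∑ i, b i • phiSq (ψ' i) (y' i)‖ := by
  set θ := (1 / 2 : ℝ) • phiSq w (-1)
  have hloss (u : EuclideanSpace ℝ (Fin d)) (z : ℝ) :
      (1 / 2 : ℝ) * (⟪w, u⟫_ℝ - z) ^ 2 = ⟪θ, phiSq u z⟫_ℝ := by
    rw [real_inner_smul_left, inner_phiSq_phiSq]
    ring
  have hθ : ‖θ‖ ≤ 1 := by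
    rw [norm_smul, norm_phiSq, Real.norm_of_nonneg one_half_pos.le]
    nlinarith [norm_nonneg w]
  simp only [hloss]
  exact abs_sum_inner_sub_sum_inner_le hθ _ _ _ _

/-- Kernel-distance bound on the empirical IPM for square loss: the weighted difference of
square losses of a norm-bounded linear model on two weighted samples is bounded by the
empirical kernel distance (MMD) between the samples for the kernel induced by `φ`. -/
theorem square_loss_ipm_le_kernel_distance {d : ℕ} (m n : ℕ)
    (a : Fin m → ℝ) (ψ : Fin m → EuclideanSpace ℝ (Fin d)) (y : Fin m → ℝ)
    (b : Fin n → ℝ) (ψ' : Fin n → EuclideanSpace ℝ (Fin d)) (y' : Fin n → ℝ)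
    (ha : ∀ i, 0 ≤ a i) (hb : ∀ i, 0 ≤ b i)
    (w : EuclideanSpace ℝ (Fin d)) (hw : ‖w‖ ≤ 1) :
    |(∑ i, a i * ((1 / 2 : ℝ) * (⟪w, ψ i⟫_ℝ - y i) ^ 2)) -
        ∑ i, b i * ((1 / 2 : ℝ) * (⟪w, ψ' i⟫_ℝ - y' i) ^ 2)| ≤
      ‖(∑ i, a i • phiSq (ψ i) (y i)) - ∑ i, b i • phiSq (ψ' i) (y' i)‖ :=
  square_loss_ipm_le_kernel_distance_general m n a ψ y b ψ' y' w hw
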